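/- arXiv:1507.00600 — 2 statements merged into one kernel-verified Lean document; each statement's English description precedes it below -/
import Mathlib

section
/- Let τ be a smooth binary relation on words over an alphabet Σ, fix a language M, and let L ⊆ M be a τ-independent language. For every i ≥ 1, writing D_i = μ^i(L) \ μ^{i-1}(L): ind(μ^i(L)) is contained in the disjoint union of μ^i(L) and σ_{μ^{i-1}(L)}^{≥2}(D_i), which in turn is contained in μ^i(L) ∪ (τ⁻¹)^{≥2}(D_i). -/
/-!
Put `Y = μ^{i-1}(L)` and `X = μ(Y)`. Since `Y` is independent, `Y ⊆ X`, and `σ_Y(Y) = ∅`,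
so `σ_Y^k(X) = σ_Y^k(X \ Y)` for `k ≥ 1`. Every word of `ind(Y)` lies either in `μ(Y)` or
in `σ_Y(ind(Y))`; iterating this, a word of `ind(Y)` outside `σ_Y^*(μ(Y))` lies in
`σ_Y^∩(ind(Y))`, and smoothness rules that out. Hence `ind(X) ⊆ ind(Y) ⊆ σ_Y^*(X)`, and a word of `ind(X) \ X`
is not in `σ_Y^1(X) ⊆ τ⁻¹(X)` either, which leaves `σ_Y^{≥2}(X \ Y)`.
-/

open Set

/-- Image of a language under a binary word relation: τ(X) = {y | ∃ x ∈ X, τ(x,y)}. -/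
def img {α : Type*} (τ : List α → List α → Prop) (X : Set (List α)) : Set (List α) :=
  {y | ∃ x ∈ X, τ x y}

/-- Inverse image: τ⁻¹(X) = {y | ∃ x ∈ X, τ(y,x)}. -/
def pre {α : Type*} (τ : List α → List α → Prop) (X : Set (List α)) : Set (List α) :=
  {y | ∃ x ∈ X, τ y x}

/-- ind(X) = M \ (τ(X) ∪ τ⁻¹(X)). -/
def ind {α : Type*} (τ : List α → List α → Prop) (M X : Set (List α)) : Set (List α) :=
  M \ (img τ X ∪ pre τ X)

/-- The max-min operator μ(X) = ind(X) \ τ⁻¹(ind(X)). -/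
def mu {α : Type*} (τ : List α → List α → Prop) (M X : Set (List α)) : Set (List α) :=
  ind τ M X \ pre τ (ind τ M X)

/-- σ_X(A) = τ⁻¹(A) ∩ ind(X). -/
def sig {α : Type*} (τ : List α → List α → Prop) (M X A : Set (List α)) : Set (List α) :=
  pre τ A ∩ ind τ M X

/-- Φ^*(A) = ⋃_{i≥0} Φ^i(A). -/
def opStar {α : Type*} (Φ : Set (List α) → Set (List α)) (A : Set (List α)) : Set (List α) :=
  ⋃ i : ℕ, Φ^[i] A

/-- Φ^+(A) = ⋃_{i≥1} Φ^i(A). -/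
def opPlus {α : Type*} (Φ : Set (List α) → Set (List α)) (A : Set (List α)) : Set (List α) :=
  ⋃ i ≥ 1, Φ^[i] A

/-- Φ^∩(A) = ⋂_{i≥1} Φ^i(A). -/
def opInter {α : Type*} (Φ : Set (List α) → Set (List α)) (A : Set (List α)) : Set (List α) :=
  ⋂ i ≥ 1, Φ^[i] A

/-- Φ^{≥k}(A) = ⋃_{i≥k} Φ^i(A). -/
def opGe {α : Type*} (Φ : Set (List α) → Set (List α)) (k : ℕ) (A : Set (List α)) : Set (List α) :=
  ⋃ i ≥ k, Φ^[i] A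

/-- A language is τ-independent if τ(L) ∩ L = ∅. -/
def indep {α : Type*} (τ : List α → List α → Prop) (L : Set (List α)) : Prop :=
  img τ L ∩ L = ∅

/-- τ is smooth (relative to M) if σ_X^∩(ind(X)) ⊆ σ_X^*(μ(X)) for every language X. -/
def smooth {α : Type*} (τ : List α → List α → Prop) (M : Set (List α)) : Prop :=
  ∀ X : Set (List α), opInter (sig τ M X) (ind τ M X) ⊆ opStar (sig τ M X) (mu τ M X)

/-- L is P_τ-maximal relative to M: L ⊆ M, L is τ-independent, and no word of M \ L
can be added to L keeping τ-independence. -/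
def maximalIndep {α : Type*} (τ : List α → List α → Prop) (M L : Set (List α)) : Prop :=
  L ⊆ M ∧ indep τ L ∧ ∀ w ∈ M \ L, ¬ indep τ (L ∪ {w})

section Iterates

variable {β : Type*} {Φ : Set β → Set β}

lemma monotone_of_map_union (hΦ : ∀ A B, Φ (A ∪ B) = Φ A ∪ Φ B) : Monotone Φ := by
  intro A B h
  rw [← union_eq_self_of_subset_left h, hΦ]
  exact subset_union_left

lemma iterate_map_union (hΦ : ∀ A B, Φ (A ∪ B) = Φ A ∪ Φ B) (n : ℕ) (A B : Set β) :
    Φ^[n] (A ∪ B) = Φ^[n] A ∪ Φ^[n] B := by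
  induction n generalizing A B with
  | zero => rfl
  | succ n ih => simp only [Function.iterate_succ_apply, hΦ, ih]

end Iterates

section Operators

variable {α : Type*} (τ : List α → List α → Prop) (M : Set (List α))

lemma pre_mono : Monotone (pre τ) := by
  rintro A B h z ⟨x, hx, hz⟩
  exact ⟨x, h hx, hz⟩

lemma pre_empty : pre τ ∅ = ∅ := by
  simp [pre]

lemma pre_union (A B : Set (List α)) : pre τ (A ∪ B) = pre τ A ∪ pre τ B := by
  ext z
  simp only [pre, mem_union, mem_ofPred_eq, or_and_right, exists_or]

lemma ind_anti : Antitone (ind τ M) := by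
  intro Y X h
  exact sdiff_subset_sdiff_right (union_subset_union (fun z ⟨x, hx, hz⟩ => ⟨x, h hx, hz⟩)
    (pre_mono τ h))

lemma mu_subset_ind (Y : Set (List α)) : mu τ M Y ⊆ ind τ M Y :=
  sdiff_subset

lemma mu_subset (Y : Set (List α)) : mu τ M Y ⊆ M :=
  (mu_subset_ind τ M Y).trans sdiff_subset

lemma indep_mu (Y : Set (List α)) : indep τ (mu τ M Y) := by
  refine eq_empty_iff_forall_notMem.2 ?_
  rintro y ⟨⟨x, hx, hxy⟩, hy⟩
  exact hx.2 ⟨y, mu_subset_ind τ M Y hy, hxy⟩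

lemma subset_mu {Y : Set (List α)} (hYM : Y ⊆ M) (hY : indep τ Y) : Y ⊆ mu τ M Y := by
  have notMem : ∀ x ∈ img τ Y, x ∉ Y := fun x hxi hxY =>
    (eq_empty_iff_forall_notMem.1 hY) x ⟨hxi, hxY⟩
  intro y hy
  have hind : y ∈ ind τ M Y := by
    refine ⟨hYM hy, ?_⟩
    rintro (hyi | ⟨x, hx, hyx⟩)
    · exact notMem y hyi hy
    · exact notMem x ⟨y, hy, hyx⟩ hx
  exact ⟨hind, fun ⟨z, hz, hyz⟩ => hz.2 (Or.inl ⟨y, hy, hyz⟩)⟩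

lemma iterate_mu_subset_and_indep {L : Set (List α)} (hLM : L ⊆ M) (hL : indep τ L) :
    ∀ j : ℕ, (mu τ M)^[j] L ⊆ M ∧ indep τ ((mu τ M)^[j] L)
  | 0 => ⟨hLM, hL⟩
  | j + 1 => by
    rw [Function.iterate_succ_apply']
    exact ⟨mu_subset τ M _, indep_mu τ M _⟩

variable (Y : Set (List α))

lemma sig_le_pre : sig τ M Y ≤ pre τ := fun _ => inter_subset_left

lemma sig_union (A B : Set (List α)) : sig τ M Y (A ∪ B) = sig τ M Y A ∪ sig τ M Y B := by
  simp only [sig, pre_union, union_inter_distrib_right]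

lemma sig_mono : Monotone (sig τ M Y) :=
  monotone_of_map_union (sig_union τ M Y)

lemma iterate_sig_self (n : ℕ) : (sig τ M Y)^[n + 1] Y = ∅ := by
  have hself : sig τ M Y Y = ∅ :=
    eq_empty_iff_forall_notMem.2 fun _ ⟨hp, hind⟩ => hind.2 (Or.inr hp)
  have hempty : sig τ M Y ∅ = ∅ := by rw [sig, pre_empty, empty_inter]
  rw [Function.iterate_succ_apply, hself, Function.iterate_fixed hempty]

lemma iterate_sig_eq_iterate_sig_diff {X : Set (List α)} (hYX : Y ⊆ X) (n : ℕ) :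
    (sig τ M Y)^[n + 1] X = (sig τ M Y)^[n + 1] (X \ Y) := by
  conv_lhs => rw [← union_sdiff_cancel hYX]
  rw [iterate_map_union (sig_union τ M Y), iterate_sig_self, empty_union]

lemma ind_subset_mu_union_sig : ind τ M Y ⊆ mu τ M Y ∪ sig τ M Y (ind τ M Y) := by
  intro z hz
  by_cases hp : z ∈ pre τ (ind τ M Y)
  · exact Or.inr ⟨hp, hz⟩
  · exact Or.inl ⟨hz, hp⟩

lemma iterate_sig_two_subset_pre_ind (A : Set (List α)) (n : ℕ) :
    (sig τ M Y)^[n + 2] A ⊆ pre τ (ind τ M Y) := by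
  rw [Function.iterate_succ_apply']
  exact (sig_le_pre τ M Y _).trans (pre_mono τ (by
    rw [Function.iterate_succ_apply']; exact inter_subset_right))

end Operators

lemma subset_opStar_union_opInter {α : Type*} {Φ : Set (List α) → Set (List α)}
    (hΦ : ∀ A B, Φ (A ∪ B) = Φ A ∪ Φ B) {A B : Set (List α)} (hA : A ⊆ B ∪ Φ A) :
    A ⊆ opStar Φ B ∪ opInter Φ A := by
  intro w hw
  by_cases hstar : w ∈ opStar Φ B
  · exact Or.inl hstar
  have hstar' : ∀ n, w ∉ Φ^[n] B := fun n hn => hstar (mem_iUnion.2 ⟨n, hn⟩)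
  have hiter : ∀ n, w ∈ Φ^[n] A := by
    intro n
    induction n with
    | zero => exact hw
    | succ n ih =>
      have hstep : Φ^[n] A ⊆ Φ^[n] B ∪ Φ^[n + 1] A := by
        rw [Function.iterate_succ_apply, ← iterate_map_union hΦ]
        exact (monotone_of_map_union hΦ).iterate n hA
      exact (hstep ih).resolve_left (hstar' n)
  exact Or.inr (mem_iInter₂.2 fun n _ => hiter n)

section Smooth

variable {α : Type*} {τ : List α → List α → Prop} {M : Set (List α)}

lemma smooth.ind_subset_opStar (hsm : smooth τ M) (Y : Set (List α)) :
    ind τ M Y ⊆ opStar (sig τ M Y) (mu τ M Y) := by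
  have hsplit := subset_opStar_union_opInter (sig_union τ M Y) (ind_subset_mu_union_sig τ M Y)
  exact hsplit.trans (union_subset subset_rfl (hsm Y))

lemma smooth.ind_mu_subset (hsm : smooth τ M) {Y : Set (List α)} (hYM : Y ⊆ M)
    (hY : indep τ Y) :
    ind τ M (mu τ M Y) ⊆ mu τ M Y ∪ opGe (sig τ M Y) 2 (mu τ M Y \ Y) := by
  have hYX := subset_mu τ M hYM hY
  intro w hw
  obtain ⟨k, hk⟩ := mem_iUnion.1 (hsm.ind_subset_opStar Y (ind_anti τ M hYX hw))
  match k, hk with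
  | 0, hk => exact Or.inl hk
  | 1, hk => exact absurd (Or.inr (sig_le_pre τ M Y _ hk)) hw.2
  | n + 2, hk =>
    rw [iterate_sig_eq_iterate_sig_diff τ M Y hYX] at hk
    exact Or.inr (mem_iUnion₂.2 ⟨n + 2, by omega, hk⟩)

end Smooth

lemma mu_inter_opGe_two_sig {α : Type*} (τ : List α → List α → Prop)
    (M Y A : Set (List α)) : mu τ M Y ∩ opGe (sig τ M Y) 2 A = ∅ := by
  refine eq_empty_iff_forall_notMem.2 fun w ⟨hw, hge⟩ => ?_
  obtain ⟨k, hk2, hk⟩ := mem_iUnion₂.1 hge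
  obtain ⟨n, rfl⟩ : ∃ n, k = n + 2 := ⟨k - 2, by omega⟩
  exact hw.2 (iterate_sig_two_subset_pre_ind τ M Y A n hk)

lemma opGe_sig_subset_opGe_pre {α : Type*} (τ : List α → List α → Prop) (M Y : Set (List α))
    (k : ℕ) (A : Set (List α)) : opGe (sig τ M Y) k A ⊆ opGe (pre τ) k A :=
  iUnion₂_mono fun n _ => (sig_mono τ M Y).iterate_le_of_le (sig_le_pre τ M Y) n A

theorem stmt10 {α : Type*} (τ : List α → List α → Prop) (M L : Set (List α))
    (hsm : smooth τ M) (hLM : L ⊆ M) (hL : indep τ L)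
    (i : ℕ) (hi : 1 ≤ i) :
    ind τ M ((mu τ M)^[i] L) ⊆
      (mu τ M)^[i] L ∪
        opGe (sig τ M ((mu τ M)^[i-1] L)) 2 ((mu τ M)^[i] L \ (mu τ M)^[i-1] L) ∧
    (mu τ M)^[i] L ∩
        opGe (sig τ M ((mu τ M)^[i-1] L)) 2 ((mu τ M)^[i] L \ (mu τ M)^[i-1] L) = ∅ ∧
    (mu τ M)^[i] L ∪
        opGe (sig τ M ((mu τ M)^[i-1] L)) 2 ((mu τ M)^[i] L \ (mu τ M)^[i-1] L) ⊆
      (mu τ M)^[i] L ∪ opGe (pre τ) 2 ((mu τ M)^[i] L \ (mu τ M)^[i-1] L) := by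
  obtain ⟨j, rfl⟩ : ∃ j, i = j + 1 := ⟨i - 1, by omega⟩
  rw [Nat.add_sub_cancel, Function.iterate_succ_apply']
  obtain ⟨hYM, hY⟩ := iterate_mu_subset_and_indep τ M hLM hL j
  exact ⟨hsm.ind_mu_subset hYM hY, mu_inter_opGe_two_sig τ M _ _,
    union_subset_union_right _ (opGe_sig_subset_opGe_pre τ M _ 2 _)⟩
end

section
/- Let τ be an input-altering and smooth binary relation on words over an alphabet Σ, fix a language M, and let L ⊆ M be a τ-independent language. If there exists i ≥ 0 such that μ^{i+1}(L) = μ^i(L), then μ^i(L) is P_τ-maximal relative to M and contains L. -/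
open Set

/-!
If `μ(K) = K`, the words of `ind(K) \ K` are exactly the obstructions to maximality of `K`.
Each such word `x` lies outside `μ(K)`, so `τ(x, y)` for some `y ∈ ind(K)`, and `y ∉ K` because
`x ∉ τ⁻¹(K)`. Hence `B = ind(K) \ K` satisfies `B ⊆ σ_K(B)`, so `B ⊆ σ_K^∩(ind(K))`, which by
smoothness lies in `σ_K^*(μ(K)) = σ_K^*(K) = K` (as `σ_K(K) = ∅`). Thus `B = ∅`.
Iterating `μ` from an independent `L ⊆ M` only grows the language, since `X ⊆ μ(X)` for every
independent `X ⊆ M`.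
-/

section Iterate

variable {β : Type*} [Preorder β] {f : β → β} {a : β}

theorem Monotone.iterate_le_of_map_le (hf : Monotone f) (h : f a ≤ a) : ∀ n, f^[n] a ≤ a
  | 0 => le_rfl
  | n + 1 => by
    rw [Function.iterate_succ_apply']
    exact (hf (hf.iterate_le_of_map_le h n)).trans h

theorem Monotone.le_iterate_of_le_map (hf : Monotone f) (h : a ≤ f a) : ∀ n, a ≤ f^[n] a
  | 0 => le_rfl
  | n + 1 => by
    rw [Function.iterate_succ_apply']
    exact h.trans (hf (hf.le_iterate_of_le_map h n))

end Iterate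

section Operators

variable {α : Type*} {Φ : Set (List α) → Set (List α)} {A B : Set (List α)}

theorem opStar_subset_of_map_subset (hΦ : Monotone Φ) (h : Φ A ⊆ A) : opStar Φ A ⊆ A :=
  iUnion_subset (hΦ.iterate_le_of_map_le h)

theorem subset_opInter_of_subset_map (hΦ : Monotone Φ) (hB : B ⊆ Φ B) (hBA : B ⊆ A) :
    B ⊆ opInter Φ A :=
  subset_iInter₂ fun n _ => (hΦ.le_iterate_of_le_map hB n).trans (hΦ.iterate n hBA)

end Operators

section MaxMin

variable {α : Type*} {τ : List α → List α → Prop} {M X K : Set (List α)} {w : List α}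

theorem monotone_sig : Monotone (sig τ M X) := by
  rintro A B hAB x ⟨⟨y, hy, hxy⟩, hx⟩
  exact ⟨⟨y, hAB hy, hxy⟩, hx⟩

theorem sig_self : sig τ M X X = ∅ :=
  eq_empty_of_forall_notMem fun _ ⟨hpre, hind⟩ => hind.2 (Or.inr hpre)

theorem mu_subset_s14 : mu τ M X ⊆ M :=
  fun _ hx => hx.1.1

theorem indep_mu_s14 : indep τ (mu τ M X) :=
  eq_empty_of_forall_notMem fun _ ⟨⟨_, hx, hτ⟩, hw⟩ => hx.2 ⟨_, hw.1, hτ⟩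

theorem subset_mu_of_indep (hXM : X ⊆ M) (hX : indep τ X) : X ⊆ mu τ M X := by
  have hfree : ∀ y ∈ X, ∀ z ∈ X, ¬ τ y z := fun y hy z hz hτ =>
    eq_empty_iff_forall_notMem.mp hX z ⟨⟨y, hy, hτ⟩, hz⟩
  intro x hx
  refine ⟨⟨hXM hx, ?_⟩, ?_⟩
  · rintro (⟨y, hy, hτ⟩ | ⟨y, hy, hτ⟩)
    exacts [hfree y hy x hx hτ, hfree x hx y hy hτ]
  · rintro ⟨y, hy, hτ⟩
    exact hy.2 (Or.inl ⟨x, hx, hτ⟩)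

theorem mem_ind_of_indep_union_singleton (hw : w ∈ M) (h : indep τ (X ∪ {w})) :
    w ∈ ind τ M X := by
  have hfree : ∀ y ∈ X ∪ {w}, ∀ z ∈ X ∪ {w}, ¬ τ y z := fun y hy z hz hτ =>
    eq_empty_iff_forall_notMem.mp h z ⟨⟨y, hy, hτ⟩, hz⟩
  refine ⟨hw, ?_⟩
  rintro (⟨y, hy, hτ⟩ | ⟨y, hy, hτ⟩)
  exacts [hfree y (Or.inl hy) w (Or.inr rfl) hτ, hfree w (Or.inr rfl) y (Or.inl hy) hτ]

theorem ind_diff_subset_sig (hK : mu τ M K = K) :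
    ind τ M K \ K ⊆ sig τ M K (ind τ M K \ K) := by
  rintro x ⟨hx, hxK⟩
  have hxpre : x ∈ pre τ (ind τ M K) := by
    by_contra hnot
    exact hxK (hK ▸ ⟨hx, hnot⟩)
  obtain ⟨y, hy, hτ⟩ := hxpre
  exact ⟨⟨y, ⟨hy, fun hyK => hx.2 (Or.inr ⟨y, hyK, hτ⟩)⟩, hτ⟩, hx⟩

theorem ind_subset_of_mu_eq (hsm : smooth τ M) (hK : mu τ M K = K) : ind τ M K ⊆ K := by
  have hbad : ind τ M K \ K ⊆ K :=
    calc ind τ M K \ K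
        ⊆ opInter (sig τ M K) (ind τ M K) :=
          subset_opInter_of_subset_map monotone_sig (ind_diff_subset_sig hK) sdiff_subset
      _ ⊆ opStar (sig τ M K) (mu τ M K) := hsm K
      _ ⊆ K := by
          rw [hK]
          exact opStar_subset_of_map_subset monotone_sig (sig_self.subset.trans (empty_subset K))
  exact fun x hx => by_contra fun hxK => hxK (hbad ⟨hx, hxK⟩)

theorem maximalIndep_of_mu_eq (hsm : smooth τ M) (hK : mu τ M K = K) : maximalIndep τ M K := by
  refine ⟨hK ▸ mu_subset_s14, hK ▸ indep_mu_s14, fun w ⟨hwM, hwK⟩ hindep => hwK ?_⟩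
  exact ind_subset_of_mu_eq hsm hK (mem_ind_of_indep_union_singleton hwM hindep)

theorem subset_iterate_mu {L : Set (List α)} (hLM : L ⊆ M) (hL : indep τ L) (n : ℕ) :
    L ⊆ (mu τ M)^[n] L := by
  have hstep : ∀ j, (mu τ M)^[j] L ⊆ (mu τ M)^[j + 1] L := by
    rintro (_ | j)
    · exact subset_mu_of_indep hLM hL
    · simp only [Function.iterate_succ_apply']
      exact subset_mu_of_indep mu_subset_s14 indep_mu_s14
  exact monotone_nat_of_le_succ hstep (Nat.zero_le n)

end MaxMin

theorem stmt14_general {α : Type*} (τ : List α → List α → Prop) (M L : Set (List α))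
    (hsm : smooth τ M)
    (hLM : L ⊆ M) (hL : indep τ L)
    (i : ℕ) (hfix : (mu τ M)^[i+1] L = (mu τ M)^[i] L) :
    maximalIndep τ M ((mu τ M)^[i] L) ∧ L ⊆ (mu τ M)^[i] L := by
  rw [Function.iterate_succ_apply'] at hfix
  exact ⟨maximalIndep_of_mu_eq hsm hfix, subset_iterate_mu hLM hL i⟩

theorem stmt14 {α : Type*} (τ : List α → List α → Prop) (M L : Set (List α))
    (halt : ∀ w : List α, ¬ τ w w) (hsm : smooth τ M)
    (hLM : L ⊆ M) (hL : indep τ L)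
    (i : ℕ) (hfix : (mu τ M)^[i+1] L = (mu τ M)^[i] L) :
    maximalIndep τ M ((mu τ M)^[i] L) ∧ L ⊆ (mu τ M)^[i] L :=
  stmt14_general τ M L hsm hLM hL i hfix
end
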